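/- arXiv:2411.13706 — 8 statements merged into one kernel-verified Lean document; each statement's English description precedes it below -/
import Mathlib

section
/- Let X be a Grothendieck category with a localizing subcategory Y, and let π : X → X/Y be the quotient functor. If Z is a weakly closed subcategory of X, then π(Z) = {π(M) : M ∈ Z}, the full subcategory of X/Y on objects of the form π(M) with M ∈ Z, is a weakly closed subcategory of X/Y. -/
open CategoryTheory CategoryTheory.Limits Opposite

universe v u

namespace Paper

variable {C : Type u} [Category.{v} C]

/-- An object `M` is compact if `Hom(M, -)` commutes with arbitrary (small) direct sums. -/
def IsCompactObj (M : C) : Prop :=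
  ∀ ι : Type v, Nonempty (PreservesColimitsOfShape (Discrete ι) (coyoneda.obj (op M)))

variable [Abelian C]

section
variable [HasColimits C]

/-- A full subcategory (given by its set of objects) is weakly closed if it is closed
under subobjects, quotient objects and arbitrary (small) direct sums. -/
structure IsWeaklyClosed (Z : Set C) : Prop where
  mem_of_mono : ∀ {A M : C} (f : A ⟶ M), Mono f → M ∈ Z → A ∈ Z
  mem_of_epi : ∀ {M B : C} (f : M ⟶ B), Epi f → M ∈ Z → B ∈ Z
  sigma_mem : ∀ {ι : Type v} (f : ι → C), (∀ i, f i ∈ Z) → (∐ f) ∈ Z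

/-- Closure under arbitrary (small) products. -/
def ClosedUnderProducts [HasLimits C] (Z : Set C) : Prop :=
  ∀ {ι : Type v} (f : ι → C), (∀ i, f i ∈ Z) → (∏ᶜ f) ∈ Z

/-- A closed subcategory: weakly closed and closed under products. -/
def IsClosedSub [HasLimits C] (Z : Set C) : Prop :=
  IsWeaklyClosed Z ∧ ClosedUnderProducts Z

/-- Closure under extensions. -/
def ClosedUnderExtensions (Y : Set C) : Prop :=
  ∀ S : ShortComplex C, S.ShortExact → S.X₁ ∈ Y → S.X₃ ∈ Y → S.X₂ ∈ Y

/-- A localizing subcategory: weakly closed and closed under extensions. -/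
def IsLocalizing (Y : Set C) : Prop :=
  IsWeaklyClosed Y ∧ ClosedUnderExtensions Y

/-- The full subcategory generated by a class of objects `G`: all quotient objects
of (small) direct sums of objects of `G`. -/
def generatedBy (G : Set C) : Set C :=
  { M | ∃ (ι : Type v) (f : ι → C), (∀ i, f i ∈ G) ∧ ∃ p : (∐ f) ⟶ M, Epi p }

end

/-- A filter of subobjects of an object: nonempty, upward closed, and closed under
finite intersections. -/
def IsFilterOn {O : C} (F : Set (Subobject O)) : Prop :=
  F.Nonempty ∧ (∀ {I J : Subobject O}, I ∈ F → I ≤ J → J ∈ F) ∧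
    ∀ {I J : Subobject O}, I ∈ F → J ∈ F → I ⊓ J ∈ F

/-- A principal filter consists of all subobjects containing a fixed one. -/
def IsPrincipalFilter {O : C} (F : Set (Subobject O)) : Prop :=
  ∃ I : Subobject O, F = { J | I ≤ J }

variable {A : Type v}

/-- A filter system in a family of objects. -/
def IsFilterSystem (O : A → C) (F : ∀ α, Set (Subobject (O α))) : Prop :=
  (∀ α, IsFilterOn (F α)) ∧
    ∀ (α β : A) (f : O α ⟶ O β), ∀ J ∈ F β, (Subobject.pullback f).obj J ∈ F α

/-- An ideal in a family of generators: a choice of subobject `I α ⊆ O α` for each `α`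
such that `f (I α) ⊆ I β` for every morphism `f : O α ⟶ O β`
(expressed as `I α ≤ f⁻¹ (I β)`). -/
def IsIdealIn (O : A → C) (I : ∀ α, Subobject (O α)) : Prop :=
  ∀ (α β : A) (f : O α ⟶ O β), I α ≤ (Subobject.pullback f).obj (I β)

/-- The quotient object `O/I` of `O` by a subobject `I`. -/
noncomputable def quotBy {O : C} (I : Subobject O) : C := cokernel I.arrow

/-- The weakly closed subcategory generated by the objects `O α / I`, `I ∈ F α`. -/
def wcOfFilterSystem [HasColimits C] (O : A → C) (F : ∀ α, Set (Subobject (O α))) : Set C :=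
  generatedBy { M | ∃ (α : A) (I : Subobject (O α)), I ∈ F α ∧ Nonempty (quotBy I ≅ M) }

/-- The filter system associated to a subcategory `Z`: `F α = {I | O α / I ∈ Z}`. -/
def filterOf (O : A → C) (Z : Set C) (α : A) : Set (Subobject (O α)) :=
  { I | quotBy I ∈ Z }

section QuotientCat

variable {D : Type u} [Category.{v} D]

/-- The image `π(Z)` of a subcategory, as a full subcategory of the target
(closed under isomorphism). -/
def imageSub (π : C ⥤ D) (Z : Set C) : Set D := { N | ∃ M ∈ Z, Nonempty (π.obj M ≅ N) }

/-- The preimage `π⁻¹(𝒵)` of a subcategory. -/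
def preimageSub (π : C ⥤ D) (Z : Set D) : Set C := { M | π.obj M ∈ Z }

/-- `M` is `Y`-torsionfree if it has no nonzero subobject belonging to `Y`. -/
def IsTorsionFree (Y : Set C) (M : C) : Prop :=
  ∀ (N : C) (f : N ⟶ M), Mono f → N ∈ Y → IsZero N

/-- `Z` is `Y`-essentially stable if `ωπ(M) ∈ Z` for all `M ∈ Z`. -/
def EssStable (π : C ⥤ D) (ω : D ⥤ C) (Z : Set C) : Prop :=
  ∀ M ∈ Z, ω.obj (π.obj M) ∈ Z

/-- `Z'`: the full subcategory generated by the `Y`-torsionfree objects of `Z`. -/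
def torsPart [HasColimits C] (Y Z : Set C) : Set C :=
  generatedBy { M | M ∈ Z ∧ IsTorsionFree Y M }

/-- `Z` is `Y`-torsionfree generated if every object of `Z` is a quotient of a direct sum
of `Y`-torsionfree objects of `Z`. -/
def TorsionfreeGenerated [HasColimits C] (Y Z : Set C) : Prop :=
  Z ⊆ torsPart Y Z

/-- `Z` is `Y`-weakly closed: weakly closed, `Y`-essentially stable
and `Y`-torsionfree generated. -/
def IsYWeaklyClosed [HasColimits C] (π : C ⥤ D) (ω : D ⥤ C) (Y Z : Set C) : Prop :=
  IsWeaklyClosed Z ∧ EssStable π ω Z ∧ TorsionfreeGenerated Y Z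

/-- `Z` is `Y`-closed: closed, `Y`-essentially stable and `Y`-torsionfree generated. -/
def IsYClosed [HasLimits C] [HasColimits C] (π : C ⥤ D) (ω : D ⥤ C) (Y Z : Set C) : Prop :=
  IsClosedSub Z ∧ EssStable π ω Z ∧ TorsionfreeGenerated Y Z

end QuotientCat

/-- The Gabriel product `Z * W`: all objects `P` fitting in a short exact sequence
`0 → M → P → N → 0` with `M ∈ W` and `N ∈ Z`. -/
def gabrielProd (Z W : Set C) : Set C :=
  { P | ∃ S : ShortComplex C, S.ShortExact ∧ S.X₁ ∈ W ∧ S.X₃ ∈ Z ∧ Nonempty (S.X₂ ≅ P) }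

/-- `Isat` is the `Y`-saturation of `I` inside `O`: the largest subobject `J ⊇ I`
with `J/I ∈ Y`; that is, `Isat/I = τ(O/I)`. -/
def IsSaturationOf (Y : Set C) {O : C} (I Isat : Subobject O) : Prop :=
  ∃ h : I ≤ Isat, cokernel (Subobject.ofLE I Isat h) ∈ Y ∧
    ∀ (J : Subobject O) (hJ : I ≤ J), cokernel (Subobject.ofLE I J hJ) ∈ Y → J ≤ Isat


/-- The subcategory generated by the objects `O α / I α` for an ideal `I`. -/
def wcOfIdeal [HasColimits C] (O : A → C) (I : ∀ α, Subobject (O α)) : Set C :=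
  generatedBy { M | ∃ α : A, Nonempty (quotBy (I α) ≅ M) }

/-- The union `Z₁ ∪ Z₂` of two weakly closed subcategories: explicitly, all
subquotients of objects `M ⊞ N` with `M ∈ Z₁` and `N ∈ Z₂`. -/
def unionWC (Z₁ Z₂ : Set C) : Set C :=
  { P | ∃ (M N Q : C) (i : Q ⟶ M ⊞ N) (p : Q ⟶ P), M ∈ Z₁ ∧ N ∈ Z₂ ∧ Mono i ∧ Epi p }

/-- For a localizing subcategory `Y` of a Grothendieck category `X`, with
exact quotient functor `π : X → X/Y` (with fully faithful right adjoint `ω` and kernel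
`Y`), the image `π(Z)` of a weakly closed subcategory `Z` is weakly closed in `X/Y`. -/
theorem statement_5 {X : Type u} [Category.{v} X] [Abelian X]
    [HasColimits X] [HasFilteredColimits X] [AB5 X]
    (hgen : ∃ G : X, IsSeparator G)
    {D : Type u} [Category.{v} D] [Abelian D] [HasColimits D]
    (Y : Set X) (hYloc : IsLocalizing Y)
    (π : X ⥤ D) (ω : D ⥤ X) (adj : π ⊣ ω) [PreservesFiniteLimits π]
    [ω.Full] [ω.Faithful]
    (hker : ∀ M : X, M ∈ Y ↔ IsZero (π.obj M))
    (Z : Set X) (hZ : IsWeaklyClosed Z) :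
    IsWeaklyClosed (imageSub π Z) := by
  haveI : π.IsLeftAdjoint := adj.isLeftAdjoint
  haveI : ω.IsRightAdjoint := adj.isRightAdjoint
  haveI hcolim : PreservesColimitsOfSize.{v, v} π := adj.leftAdjoint_preservesColimits
  haveI : IsIso adj.counit := adj.counit_isIso_of_R_fully_faithful
  -- π.map of the unit is an isomorphism
  have hunit : ∀ M : X, IsIso (π.map (adj.unit.app M)) := by
    intro M
    have h : IsIso (π.map (adj.unit.app M) ≫ adj.counit.app (π.obj M)) := by
      rw [adj.left_triangle_components M]; exact IsIso.id _
    exact IsIso.of_isIso_comp_right _ (adj.counit.app (π.obj M))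
  constructor
  · -- closed under subobjects
    intro A N f hf hN
    obtain ⟨M, hM, ⟨e⟩⟩ := hN
    haveI : Mono f := hf
    set g : A ⟶ π.obj M := f ≫ e.inv with hg
    haveI : Mono g := mono_comp _ _
    haveI : Mono (ω.map g) := ω.map_mono g
    set P := pullback (ω.map g) (adj.unit.app M) with hP
    haveI : Mono (pullback.snd (ω.map g) (adj.unit.app M)) :=
      pullback.snd_of_mono
    have hPZ : P ∈ Z := hZ.mem_of_mono (pullback.snd (ω.map g) (adj.unit.app M))
      inferInstance hM
    -- map the pullback square by π
    have hpb : IsPullback (π.map (pullback.fst (ω.map g) (adj.unit.app M)))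
        (π.map (pullback.snd (ω.map g) (adj.unit.app M)))
        (π.map (ω.map g)) (π.map (adj.unit.app M)) :=
      (IsPullback.of_hasPullback (ω.map g) (adj.unit.app M)).map π
    haveI := hunit M
    -- the pullback of an isomorphism is an isomorphism
    haveI : IsIso (π.map (pullback.fst (ω.map g) (adj.unit.app M))) := by
      have hsq : CommSq (𝟙 (π.obj (ω.obj A)))
          (π.map (ω.map g) ≫ inv (π.map (adj.unit.app M)))
          (π.map (ω.map g)) (π.map (adj.unit.app M)) := ⟨by simp⟩
      have hpb' := IsPullback.of_horiz_isIso hsq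
      have hfac := hpb.isoIsPullback_hom_fst _ _ hpb'
      rw [Category.comp_id] at hfac
      rw [← hfac]
      infer_instance
    refine ⟨P, hPZ, ⟨asIso (π.map (pullback.fst (ω.map g) (adj.unit.app M))) ≪≫
      asIso (adj.counit.app A)⟩⟩
  · -- closed under quotients
    intro N B f hf hN
    obtain ⟨M, hM, ⟨e⟩⟩ := hN
    haveI : Epi f := hf
    set g : π.obj M ⟶ B := e.hom ≫ f with hg
    haveI : Epi g := epi_comp _ _
    set h : M ⟶ ω.obj B := adj.unit.app M ≫ ω.map g with hh
    have hfac : π.map h ≫ adj.counit.app B = g := by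
      rw [hh, Functor.map_comp, Category.assoc, adj.counit_naturality g,
        adj.left_triangle_components_assoc]
    have hepi : Epi (π.map h) := by
      have : π.map h = g ≫ inv (adj.counit.app B) := by
        rw [← hfac]; simp
      rw [this]; exact epi_comp _ _
    -- factor h through its image
    have himZ : image h ∈ Z := hZ.mem_of_epi (factorThruImage h) inferInstance hM
    haveI : Mono (π.map (image.ι h)) := π.map_mono _
    have hepiι : Epi (π.map (image.ι h)) := by
      have : π.map h = π.map (factorThruImage h) ≫ π.map (image.ι h) := by
        rw [← Functor.map_comp, image.fac]
      rw [this] at hepi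
      exact epi_of_epi (π.map (factorThruImage h)) (π.map (image.ι h))
    haveI : Epi (π.map (image.ι h)) := hepiι
    haveI : IsIso (π.map (image.ι h)) := isIso_of_mono_of_epi _
    exact ⟨image h, himZ, ⟨asIso (π.map (image.ι h)) ≪≫ asIso (adj.counit.app B)⟩⟩
  · -- closed under direct sums
    intro ι f hf
    choose M hM e using hf
    refine ⟨∐ M, hZ.sigma_mem M hM, ⟨?_⟩⟩
    exact PreservesCoproduct.iso π M ≪≫ Sigma.mapIso (fun i => (e i).some)

end Paper
end

section
/- Let X be a Grothendieck category with a localizing subcategory Y, quotient functor π : X → X/Y and section functor ω : X/Y → X. If 𝒵 is a weakly closed subcategory of X/Y, then the full subcategory π^{-1}(𝒵) = {M ∈ X : π(M) ∈ 𝒵} is weakly closed in X and Y-essentially stable. -/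
open CategoryTheory CategoryTheory.Limits Opposite

universe v u

namespace Paper

variable {C : Type u} [Category.{v} C]

variable [Abelian C]

variable {A : Type v}

theorem IsWeaklyClosed.preimage {C : Type u} [Category.{v} C] [Abelian C] [HasColimits C]
    {D : Type u} [Category.{v} D] [Abelian D] [HasColimits D] {Z : Set D}
    (hZ : IsWeaklyClosed Z) (π : C ⥤ D) [π.PreservesMonomorphisms]
    [PreservesColimitsOfSize.{v, v} π] : IsWeaklyClosed (preimageSub π Z) where
  mem_of_mono f _ hM := hZ.mem_of_mono (π.map f) inferInstance hM
  mem_of_epi f _ hM := hZ.mem_of_epi (π.map f) inferInstance hM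
  sigma_mem f hf :=
    hZ.mem_of_mono (PreservesCoproduct.iso π f).hom inferInstance (hZ.sigma_mem _ hf)

/-- The counit `π ω N ⟶ N` is a split mono because `ω` is full. -/
theorem essStable_preimageSub {C : Type u} [Category.{v} C]
    {D : Type u} [Category.{v} D] [Abelian D] [HasColimits D] {Z : Set D}
    (hZ : IsWeaklyClosed Z) {π : C ⥤ D} {ω : D ⥤ C} (adj : π ⊣ ω) [ω.Full] :
    EssStable π ω (preimageSub π Z) := fun M hM =>
  hZ.mem_of_mono (adj.counit.app (π.obj M)) inferInstance hM

theorem statement_6_general {X : Type u} [Category.{v} X] [Abelian X]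
    [HasColimits X]
    {D : Type u} [Category.{v} D] [Abelian D] [HasColimits D]
    (π : X ⥤ D) (ω : D ⥤ X) (adj : π ⊣ ω) [PreservesFiniteLimits π]
    [ω.Full]
    (𝒵 : Set D) (h𝒵 : IsWeaklyClosed 𝒵) :
    IsWeaklyClosed (preimageSub π 𝒵) ∧ EssStable π ω (preimageSub π 𝒵) := by
  have := adj.leftAdjoint_preservesColimits
  exact ⟨h𝒵.preimage π, essStable_preimageSub h𝒵 adj⟩

/-- If `𝒵` is weakly closed in `X/Y`, then `π⁻¹(𝒵)` is weakly closed in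
`X` and `Y`-essentially stable. -/
theorem statement_6 {X : Type u} [Category.{v} X] [Abelian X]
    [HasColimits X] [HasFilteredColimits X] [AB5 X]
    (hgen : ∃ G : X, IsSeparator G)
    {D : Type u} [Category.{v} D] [Abelian D] [HasColimits D]
    (Y : Set X) (hYloc : IsLocalizing Y)
    (π : X ⥤ D) (ω : D ⥤ X) (adj : π ⊣ ω) [PreservesFiniteLimits π]
    [ω.Full] [ω.Faithful]
    (hker : ∀ M : X, M ∈ Y ↔ IsZero (π.obj M))
    (𝒵 : Set D) (h𝒵 : IsWeaklyClosed 𝒵) :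
    IsWeaklyClosed (preimageSub π 𝒵) ∧ EssStable π ω (preimageSub π 𝒵) :=
  statement_6_general π ω adj 𝒵 h𝒵

end Paper
end

section
/- Let X be a Grothendieck category with a localizing subcategory Y, quotient functor π : X → X/Y and section functor ω : X/Y → X. Let Z be a weakly closed subcategory of X, and let Z' be the full subcategory generated by the Y-torsionfree objects contained in Z. Then Z' is weakly closed in X and Y-torsionfree generated, and Z' is Y-essentially stable if and only if Z is Y-essentially stable. -/
open CategoryTheory CategoryTheory.Limits Opposite

universe v u

namespace Paper

variable {C : Type u} [Category.{v} C]

variable [Abelian C]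

variable {A : Type v}

section AuxTF

attribute [local instance] CategoryTheory.Limits.HasFiniteBiproducts.of_hasFiniteProducts

open CategoryTheory.Limits.CoproductsFromFiniteFiltered

variable {C : Type u} [Category.{v} C] [Abelian C]

lemma isZero_of_mono_eq_zero {N M : C} (f : N ⟶ M) (hf : Mono f) (h : f = 0) : IsZero N := by
  haveI := hf
  rw [IsZero.iff_id_eq_zero, ← cancel_mono f]; simp [h]

lemma tf_of_mono {Y : Set C} {A M : C} (f : A ⟶ M) (hf : Mono f) (hM : IsTorsionFree Y M) :
    IsTorsionFree Y A := by
  intro N g hg hN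
  haveI := hf; haveI := hg
  exact hM N (g ≫ f) (mono_comp g f) hN

section WC
variable [HasColimits C]

lemma mem_of_iso {Z : Set C} (hZ : IsWeaklyClosed Z) {M N : C} (e : M ≅ N) (hM : M ∈ Z) :
    N ∈ Z :=
  hZ.mem_of_epi e.hom (inferInstance) hM

lemma tf_pi {Y : Set C} (hY : IsWeaklyClosed Y) {ι : Type v} (f : ι → C) [HasProduct f]
    (hf : ∀ i, IsTorsionFree Y (f i)) : IsTorsionFree Y (∏ᶜ f) := by
  intro N u hu hN
  have hcomp : ∀ i, u ≫ Pi.π f i = 0 := by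
    intro i
    set k := u ≫ Pi.π f i with hk
    haveI : Epi (Abelian.factorThruImage k) := inferInstance
    have hz : IsZero (Abelian.image k) :=
      hf i _ (Abelian.image.ι k) inferInstance
        (hY.mem_of_epi (Abelian.factorThruImage k) inferInstance hN)
    rw [← Abelian.image.fac k, hz.eq_of_src (Abelian.image.ι k) 0, comp_zero]
  have hu0 : u = 0 := by
    apply limit.hom_ext
    intro j
    simpa using hcomp j.as
  exact isZero_of_mono_eq_zero u hu hu0

end WC

section Sigma
variable [HasLimits C]

open Classical in
/-- the `i`-th "inclusion" into a product -/
noncomputable def single {ι : Type v} (f : ι → C) (i : ι) : f i ⟶ ∏ᶜ f :=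
  Pi.lift (fun j => if h : i = j then eqToHom (congrArg f h) else 0)

open Classical in
@[simp] lemma single_π {ι : Type v} (f : ι → C) (i j : ι) :
    single f i ≫ Pi.π f j = if h : i = j then eqToHom (congrArg f h) else 0 := by
  simp [single]

variable {ι : Type v} (f : ι → C)

noncomputable def mS (S : Finset (Discrete ι)) :
    (⨁ (fun x : S => (Discrete.functor f).obj x.1)) ⟶ ∏ᶜ f :=
  biproduct.desc (fun x => single f x.1.as)

lemma mS_split (S : Finset (Discrete ι)) :
    mS f S ≫ biproduct.lift
      (fun x : S => (Pi.π f x.1.as : ∏ᶜ f ⟶ (Discrete.functor f).obj x.1)) = 𝟙 _ := by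
  classical
  apply biproduct.hom_ext'
  intro x
  apply biproduct.hom_ext
  intro x'
  simp only [mS, biproduct.ι_desc_assoc, Category.assoc, biproduct.lift_π,
    Category.comp_id, Discrete.functor_obj_eq_as, biproduct.ι_π, single_π]
  by_cases h : x = x'
  · subst h; simp
  · rw [dif_neg h, dif_neg (fun he => h (Subtype.ext (Discrete.ext he)))]

instance mS_mono (S : Finset (Discrete ι)) : Mono (mS f S) :=
  ⟨fun g h e => by
    have := e =≫ biproduct.lift
      (fun x : S => (Pi.π f x.1.as : ∏ᶜ f ⟶ (Discrete.functor f).obj x.1))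
    simpa [mS_split f S] using this⟩

/-- the map from a finite subcoproduct to the product -/
noncomputable def nu (S : Finset (Discrete ι)) :
    (liftToFinsetObj (Discrete.functor f)).obj S ⟶ ∏ᶜ f :=
  Sigma.desc (fun x => single f x.1.as)

lemma nu_eq (S : Finset (Discrete ι)) :
    nu f S = (biproduct.isoCoproduct (fun x : S => (Discrete.functor f).obj x.1)).inv ≫
      mS f S := by
  apply Sigma.hom_ext
  intro x
  simp [nu, mS]

instance nu_mono (S : Finset (Discrete ι)) : Mono (nu f S) := by
  rw [nu_eq]
  exact mono_comp' (@IsIso.mono_of_iso _ _ _ _ _ (Iso.isIso_inv _)) (mS_mono f S)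

variable [HasColimits C] [HasFilteredColimits C] [AB5 C]

noncomputable def nuNat : liftToFinsetObj (Discrete.functor f) ⟶
    (Functor.const (Finset (Discrete ι))).obj (∏ᶜ f) where
  app S := nu f S
  naturality S S' h := by
    apply Sigma.hom_ext
    intro x
    simp [nu, liftToFinsetObj]

noncomputable def rr : colimit ((Functor.const (Finset (Discrete ι))).obj (∏ᶜ f)) ⟶ ∏ᶜ f :=
  colimit.desc _ { pt := ∏ᶜ f, ι := { app := fun _ => 𝟙 _, naturality := by intros; simp } }

lemma rr_isIso : IsIso (rr f) := by
  refine ⟨⟨colimit.ι ((Functor.const (Finset (Discrete ι))).obj (∏ᶜ f))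
    (∅ : Finset (Discrete ι)), ?_, ?_⟩⟩
  · apply colimit.hom_ext
    intro S
    have hw := colimit.w ((Functor.const (Finset (Discrete ι))).obj (∏ᶜ f))
      (homOfLE (Finset.empty_subset S) : (∅ : Finset (Discrete ι)) ⟶ S)
    simp only [Functor.const_obj_map, Functor.const_obj_obj, Category.id_comp] at hw
    simp [rr, hw]
  · simp [rr]

lemma tf_sigma {Y : Set C} (hY : IsWeaklyClosed Y) (hf : ∀ i, IsTorsionFree Y (f i)) :
    IsTorsionFree Y (∐ f) := by
  haveI : ∀ S, Mono ((nuNat f).app S) := fun S => nu_mono f S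
  haveI : Mono (nuNat f) := NatTrans.mono_of_mono_app _
  haveI : Mono (colim.map (nuNat f)) := colim.map_mono _
  haveI := rr_isIso f
  have e := colimit.isoColimitCocone (liftToFinsetColimitCocone (Discrete.functor f))
  have hm : Mono (e.hom ≫ colim.map (nuNat f) ≫ rr f) :=
    mono_comp' inferInstance (mono_comp' (colim.map_mono _) (@IsIso.mono_of_iso _ _ _ _ _ (rr_isIso f)))
  exact tf_of_mono _ hm (tf_pi hY f hf)

end Sigma

section MainAux

variable [HasColimits C]

lemma torsPart_subset {Y Z : Set C} (hZ : IsWeaklyClosed Z) : torsPart Y Z ⊆ Z := by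
  rintro M ⟨ι, f, hf, p, hp⟩
  exact hZ.mem_of_epi p hp (hZ.sigma_mem f (fun i => (hf i).1))

lemma mem_torsPart_self {Y Z : Set C} {M : C} (hM : M ∈ Z) (htf : IsTorsionFree Y M) :
    M ∈ torsPart Y Z := by
  refine ⟨PUnit, fun _ => M, fun _ => ⟨hM, htf⟩, Sigma.desc (fun _ => 𝟙 M), ?_⟩
  have h : Sigma.ι (fun _ : PUnit => M) PUnit.unit ≫ Sigma.desc (fun _ => 𝟙 M) = 𝟙 M := by
    simp
  exact epi_of_epi_fac h

end MainAux

end AuxTF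

/-- If `Z` is weakly closed in `X` and `Z'` is the full subcategory
generated by the `Y`-torsionfree objects of `Z`, then `Z'` is weakly closed and
`Y`-torsionfree generated, and `Z'` is `Y`-essentially stable iff `Z` is. -/
theorem statement_7 {X : Type u} [Category.{v} X] [Abelian X]
    [HasColimits X] [HasFilteredColimits X] [AB5 X]
    (hgen : ∃ G : X, IsSeparator G)
    {D : Type u} [Category.{v} D] [Abelian D] [HasColimits D]
    (Y : Set X) (hYloc : IsLocalizing Y)
    (π : X ⥤ D) (ω : D ⥤ X) (adj : π ⊣ ω) [PreservesFiniteLimits π]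
    [ω.Full] [ω.Faithful]
    (hker : ∀ M : X, M ∈ Y ↔ IsZero (π.obj M))
    (Z : Set X) (hZ : IsWeaklyClosed Z) :
    IsWeaklyClosed (torsPart Y Z) ∧ TorsionfreeGenerated Y (torsPart Y Z) ∧
      (EssStable π ω (torsPart Y Z) ↔ EssStable π ω Z) := by
  classical
  obtain ⟨G, hG⟩ := hgen
  haveI : WellPowered.{v} X := wellPowered_of_isSeparator G hG
  haveI : WellPowered.{v} Xᵒᵖ := inferInstance
  haveI : Small.{v} ({G} : Set X) := small_subsingleton _
  haveI : HasLimits X := hasLimits_of_hasColimits_of_isSeparating hG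
  haveI : π.IsLeftAdjoint := ⟨ω, ⟨adj⟩⟩
  haveI : ω.IsRightAdjoint := ⟨π, ⟨adj⟩⟩
  haveI : PreservesColimits π := adj.leftAdjoint_preservesColimits
  -- torsionfreeness of `ω`-objects
  have tf_omega : ∀ P : D, IsTorsionFree Y (ω.obj P) := by
    intro P N m hm hN
    have hz : IsZero (π.obj N) := (hker N).1 hN
    have hg : (adj.homEquiv N P).symm m = 0 := hz.eq_of_src _ _
    have hm0 : m = 0 := by
      have := congrArg (adj.homEquiv N P) hg
      rw [Equiv.apply_symm_apply] at this
      rw [this, Adjunction.homEquiv_unit, Functor.map_zero, comp_zero]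
    exact isZero_of_mono_eq_zero m hm hm0
  -- Z' is weakly closed
  have hwc : IsWeaklyClosed (torsPart Y Z) := by
    constructor
    · rintro A M i hi ⟨κ, f, hf, p, hp⟩
      haveI := hi; haveI := hp
      have hT1 : Mono (pullback.fst p i) := inferInstance
      have hT2 : Epi (pullback.snd p i) := inferInstance
      have hSZ : (∐ f) ∈ Z := hZ.sigma_mem f (fun k => (hf k).1)
      have hStf : IsTorsionFree Y (∐ f) := tf_sigma f hYloc.1 (fun k => (hf k).2)
      have hTZ : pullback p i ∈ Z := hZ.mem_of_mono (pullback.fst p i) hT1 hSZ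
      have hTtf : IsTorsionFree Y (pullback p i) := tf_of_mono _ hT1 hStf
      refine ⟨PUnit, fun _ => pullback p i, fun _ => ⟨hTZ, hTtf⟩,
        Sigma.desc (fun _ => pullback.snd p i), ?_⟩
      have h : Sigma.ι (fun _ : PUnit => pullback p i) PUnit.unit ≫
          Sigma.desc (fun _ => pullback.snd p i) = pullback.snd p i := by simp
      exact epi_of_epi_fac h
    · rintro M B q hq ⟨κ, f, hf, p, hp⟩
      haveI := hq; haveI := hp
      exact ⟨κ, f, hf, p ≫ q, epi_comp p q⟩
    · intro κ g hg
      choose ι f hf p hp using hg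
      refine ⟨(Σ k : κ, ι k), fun x => f x.1 x.2, fun x => hf x.1 x.2,
        Sigma.desc (fun x => Sigma.ι (f x.1) x.2 ≫ p x.1 ≫ Sigma.ι g x.1), ?_⟩
      constructor
      intro W a b e
      apply Sigma.hom_ext
      intro k
      haveI := hp k
      rw [← cancel_epi (p k)]
      apply Sigma.hom_ext
      intro j
      have h1 := Sigma.ι (fun x : Σ k : κ, ι k => f x.1 x.2) ⟨k, j⟩ ≫= e
      simpa using h1
  refine ⟨hwc, ?_, ?_⟩
  · -- torsionfree generated
    rintro M ⟨κ, f, hf, p, hp⟩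
    have hfZ' : ∀ k, f k ∈ torsPart Y Z ∧ IsTorsionFree Y (f k) :=
      fun k => ⟨mem_torsPart_self (hf k).1 (hf k).2, (hf k).2⟩
    exact ⟨κ, f, hfZ', p, hp⟩
  · constructor
    · -- Z' stable → Z stable
      intro hst M hM
      set η := adj.unit.app M with hη
      set N := Abelian.image η with hN
      have hNZ : N ∈ Z :=
        hZ.mem_of_epi (Abelian.factorThruImage η) inferInstance hM
      have hNtf : IsTorsionFree Y N :=
        tf_of_mono (Abelian.image.ι η) inferInstance (tf_omega (π.obj M))
      have hNZ' : N ∈ torsPart Y Z := mem_torsPart_self hNZ hNtf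
      have hωπN : ω.obj (π.obj N) ∈ torsPart Y Z := hst N hNZ'
      -- π.map (image.ι η) is an iso
      have htri : π.map η ≫ adj.counit.app (π.obj M) = 𝟙 (π.obj M) :=
        adj.left_triangle_components M
      haveI : IsIso (π.map η) := by
        have h2 : π.map η = inv (adj.counit.app (π.obj M)) :=
          IsIso.eq_inv_of_inv_hom_id htri
        rw [h2]; infer_instance
      have hfac : π.map (Abelian.factorThruImage η) ≫ π.map (Abelian.image.ι η) = π.map η := by
        rw [← π.map_comp, Abelian.image.fac]
      haveI : Epi (π.map (Abelian.factorThruImage η)) := π.map_epi _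
      haveI : Mono (π.map (Abelian.image.ι η)) := π.map_mono _
      haveI : Epi (π.map (Abelian.image.ι η)) := by
        have : Epi (π.map (Abelian.factorThruImage η) ≫ π.map (Abelian.image.ι η)) := by
          rw [hfac]; infer_instance
        exact epi_of_epi (π.map (Abelian.factorThruImage η)) _
      haveI : IsIso (π.map (Abelian.image.ι η)) := isIso_of_mono_of_epi _
      have e : π.obj N ≅ π.obj M :=
        asIso (π.map (Abelian.image.ι η)) ≪≫ asIso (adj.counit.app (π.obj M))
      have e' : ω.obj (π.obj N) ≅ ω.obj (π.obj M) := ω.mapIso e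
      exact hZ.mem_of_mono e'.inv inferInstance (torsPart_subset hZ hωπN)
    · -- Z stable → Z' stable
      intro hst M hM
      have hMZ : M ∈ Z := torsPart_subset hZ hM
      exact mem_torsPart_self (hst M hMZ) (tf_omega (π.obj M))


end Paper
end

section
/- Let X be a Grothendieck category with a localizing subcategory Y, quotient functor π : X → X/Y and section functor ω : X/Y → X. Then the assignments Z ↦ π(Z) and 𝒵 ↦ (π^{-1}(𝒵))' (the full subcategory of X generated by the Y-torsionfree objects M with π(M) ∈ 𝒵) are mutually inverse bijections between the Y-weakly closed subcategories of X and the weakly closed subcategories of X/Y. -/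
open CategoryTheory CategoryTheory.Limits Opposite

universe v u

namespace Paper

variable {C : Type u} [Category.{v} C]

variable [Abelian C]

variable {A : Type v}

section Statement8Aux

section GenBy

variable {C : Type u} [Category.{v} C] [Abelian C] [HasColimits C]

lemma mem_generatedBy_of_mem {G : Set C} {M : C} (h : M ∈ G) : M ∈ generatedBy G := by
  refine ⟨PUnit, fun _ => M, fun _ => h, Sigma.desc fun _ => 𝟙 M, ?_⟩
  have h1 : Sigma.ι (fun _ : PUnit => M) PUnit.unit ≫ Sigma.desc (fun _ => 𝟙 M) = 𝟙 M := by
    simp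
  haveI : Epi (Sigma.ι (fun _ : PUnit => M) PUnit.unit ≫ Sigma.desc (fun _ => 𝟙 M)) := by
    rw [h1]; infer_instance
  exact epi_of_epi (Sigma.ι (fun _ : PUnit => M) PUnit.unit) _

lemma generatedBy_mono_set {G G' : Set C} (h : G ⊆ G') : generatedBy G ⊆ generatedBy G' := by
  rintro M ⟨ι, f, hf, p, hp⟩
  exact ⟨ι, f, fun i => h (hf i), p, hp⟩

lemma epi_mem_generatedBy {G : Set C} {M B : C} (f : M ⟶ B) (hf : Epi f)
    (h : M ∈ generatedBy G) : B ∈ generatedBy G := by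
  obtain ⟨ι, g, hg, p, hp⟩ := h
  haveI := hp; haveI := hf
  exact ⟨ι, g, hg, p ≫ f, epi_comp p f⟩

lemma sigma_mem_generatedBy {G : Set C} {κ : Type v} (g : κ → C)
    (h : ∀ k, g k ∈ generatedBy G) : (∐ g) ∈ generatedBy G := by
  choose ι f hf p hp using h
  refine ⟨Σ k, ι k, fun x => f x.1 x.2, fun x => hf x.1 x.2,
    Sigma.desc (fun x => Sigma.ι (f x.1) x.2 ≫ p x.1 ≫ Sigma.ι g x.1), ?_⟩
  refine Preadditive.epi_of_cancel_zero _ (fun {W} u hu => ?_)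
  have hk : ∀ k : κ, Sigma.ι g k ≫ u = 0 := by
    intro k
    have h2 : p k ≫ Sigma.ι g k ≫ u = 0 := by
      apply colimit.hom_ext
      rintro ⟨j⟩
      have h3 := Sigma.ι_desc (f := fun x : Σ k, ι k => f x.1 x.2)
        (p := fun x => Sigma.ι (f x.1) x.2 ≫ p x.1 ≫ Sigma.ι g x.1) ⟨k, j⟩
      have h4 := congrArg (fun t => t ≫ u) h3
      simp only [Category.assoc, hu] at h4
      simpa using h4.symm
    haveI := hp k
    exact zero_of_epi_comp (p k) (by rw [← Category.assoc] at h2 ⊢; simpa using h2)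
  apply colimit.hom_ext
  rintro ⟨k⟩
  simpa using hk k

lemma generatedBy_subset_of_weaklyClosed {W : Set C} (hW : IsWeaklyClosed W) {S : Set C}
    (hS : S ⊆ W) : generatedBy S ⊆ W := by
  rintro M ⟨ι, f, hf, p, hp⟩
  exact hW.mem_of_epi p hp (hW.sigma_mem f fun i => hS (hf i))

end GenBy

section Crux

open CategoryTheory.Limits.CoproductsFromFiniteFiltered

variable {C : Type u} [Category.{v} C] [Abelian C] [HasColimits C] [HasLimits C]
  [HasFilteredColimits C] [AB5 C]

lemma exists_mono_sigma_to_pi {ι : Type v} (M : ι → C) :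
    ∃ m : (∐ M) ⟶ (∏ᶜ M), Mono m := by
  classical
  haveI : HasFiniteBiproducts C := Limits.HasFiniteBiproducts.of_hasFiniteProducts
  let F : Discrete ι ⥤ C := Discrete.functor M
  let bf : ∀ J : Finset (Discrete ι), ↥J → C := fun J (x : ↥J) => F.obj ↑x
  let δ : ∀ J : Finset (Discrete ι), (⨁ bf J) ⟶ ∏ᶜ M := fun J =>
    Pi.lift fun i =>
      if h : Discrete.mk i ∈ J then biproduct.π (bf J) ⟨Discrete.mk i, h⟩ else 0
  have hδπ : ∀ (J : Finset (Discrete ι)) (i : ι), δ J ≫ Pi.π M i =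
      (if h : Discrete.mk i ∈ J then biproduct.π (bf J) ⟨Discrete.mk i, h⟩ else 0) := by
    intro J i
    simp only [δ, limit.lift_π, Fan.mk_pt, Fan.mk_π_app]
  have hδmono : ∀ J, Mono (δ J) := by
    intro J
    refine Preadditive.mono_of_cancel_zero _ fun {T} g hg => ?_
    apply biproduct.hom_ext
    intro x
    have h1 : δ J ≫ Pi.π M (↑x : Discrete ι).as = biproduct.π (bf J) x := by
      rw [hδπ, dif_pos (show Discrete.mk (↑x : Discrete ι).as ∈ J from x.2)]
    rw [zero_comp, ← h1, ← Category.assoc, hg, zero_comp]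
  have hcomp : ∀ (J K : Finset (Discrete ι)) (hJK : J ≤ K) (x : ↥J) (i : ι),
      biproduct.ι (bf K) ⟨↑x, hJK x.2⟩ ≫ δ K ≫ Pi.π M i =
        biproduct.ι (bf J) x ≫ δ J ≫ Pi.π M i := by
    intro J K hJK x i
    rw [hδπ, hδπ]
    by_cases hiJ : Discrete.mk i ∈ J
    · have hiK : Discrete.mk i ∈ K := hJK hiJ
      rw [dif_pos hiJ, dif_pos hiK, biproduct.ι_π, biproduct.ι_π]
      by_cases hx1 : (↑x : Discrete ι) = Discrete.mk i
      · rw [dif_pos (show (⟨↑x, hJK x.2⟩ : ↥K) = ⟨Discrete.mk i, hiK⟩ from Subtype.ext hx1),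
          dif_pos (show x = ⟨Discrete.mk i, hiJ⟩ from Subtype.ext hx1)]
      · rw [dif_neg (show ¬((⟨↑x, hJK x.2⟩ : ↥K) = ⟨Discrete.mk i, hiK⟩) from
            fun e => hx1 (congrArg Subtype.val e)),
          dif_neg (show ¬(x = ⟨Discrete.mk i, hiJ⟩) from
            fun e => hx1 (congrArg Subtype.val e))]
    · rw [dif_neg hiJ, comp_zero]
      by_cases hiK : Discrete.mk i ∈ K
      · rw [dif_pos hiK, biproduct.ι_π,
          dif_neg (show ¬((⟨↑x, hJK x.2⟩ : ↥K) = ⟨Discrete.mk i, hiK⟩) from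
            fun e => hiJ ((show (↑x : Discrete ι) = Discrete.mk i from congrArg Subtype.val e) ▸ x.2))]
      · rw [dif_neg hiK, comp_zero]
  let G : Finset (Discrete ι) ⥤ C := liftToFinsetObj F
  let γ : ∀ J, G.obj J ⟶ ∏ᶜ M := fun J =>
    ((biproduct.isoCoproduct (bf J)).inv ≫ δ J : (∐ bf J) ⟶ ∏ᶜ M)
  have hγι : ∀ (J : Finset (Discrete ι)) (x : ↥J),
      Sigma.ι (bf J) x ≫ γ J = biproduct.ι (bf J) x ≫ δ J := by
    intro J x
    show Sigma.ι (bf J) x ≫ (biproduct.isoCoproduct (bf J)).inv ≫ δ J = _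
    rw [← Category.assoc, biproduct.isoCoproduct_inv, Sigma.ι_desc]
  have hnat : ∀ {J K : Finset (Discrete ι)} (h : J ⟶ K), G.map h ≫ γ K = γ J := by
    intro J K h
    have key : ∀ x : ↥J,
        Sigma.ι (bf J) x ≫ G.map h ≫ γ K = Sigma.ι (bf J) x ≫ γ J := by
      intro x
      have hmap : Sigma.ι (bf J) x ≫ G.map h = Sigma.ι (bf K) ⟨↑x, h.down.down x.2⟩ := by
        simp only [G, liftToFinsetObj]
        rw [Sigma.ι_desc]
      rw [← Category.assoc (Sigma.ι (bf J) x) (G.map h), hmap, hγι]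
      refine (hγι K ⟨↑x, h.down.down x.2⟩).trans ?_
      apply limit.hom_ext
      rintro ⟨i⟩
      have := hcomp J K h.down.down x i
      simpa only [Category.assoc] using this
    apply colimit.hom_ext
    rintro ⟨x⟩
    have := key x
    exact this
  let cγ : Cocone G :=
    { pt := ∏ᶜ M
      ι := { app := γ, naturality := fun J K h => by
              rw [hnat h]
              simp } }
  haveI : ∀ J, Mono (cγ.ι.app J) := by
    intro J
    haveI := hδmono J
    show Mono ((biproduct.isoCoproduct (bf J)).inv ≫ δ J)
    exact mono_comp _ _
  haveI : Mono cγ.ι := NatTrans.mono_of_mono_app cγ.ι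
  haveI : PreservesFiniteLimits (colim (J := Finset (Discrete ι)) (C := C)) :=
    inferInstance
  haveI : (colim (J := Finset (Discrete ι)) (C := C)).PreservesMonomorphisms :=
    preservesMonomorphisms_of_preservesLimitsOfShape _
  let P := (Functor.const (Finset (Discrete ι))).obj (∏ᶜ M)
  have hι : ∀ J, colimit.ι P J = colimit.ι P ⊥ := by
    intro J
    have hw := colimit.w P (homOfLE (bot_le : (⊥ : Finset (Discrete ι)) ≤ J))
    simpa [P] using hw
  let d : colimit P ⟶ ∏ᶜ M :=
    colimit.desc P { pt := ∏ᶜ M, ι := { app := fun _ => 𝟙 _, naturality := fun _ _ _ => by simp [P] } }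
  have hd1 : colimit.ι P ⊥ ≫ d = 𝟙 (∏ᶜ M) := colimit.ι_desc _ _
  have hd2 : d ≫ colimit.ι P ⊥ = 𝟙 (colimit P) := by
    apply colimit.hom_ext
    intro J
    have h5 : colimit.ι P J ≫ d = 𝟙 (∏ᶜ M) := colimit.ι_desc _ _
    rw [← Category.assoc, Category.comp_id, h5, hι J]
    exact Category.id_comp _
  haveI : IsIso d := ⟨colimit.ι P ⊥, hd2, hd1⟩
  let e : colimit F ≅ colimit G :=
    colimit.isoColimitCocone (liftToFinsetColimitCocone F)
  haveI : Mono (colim.map cγ.ι) := colim.map_mono cγ.ι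
  refine ⟨e.hom ≫ colim.map cγ.ι ≫ d, ?_⟩
  exact mono_comp _ _

end Crux

section AdjAux

variable {C : Type u} [Category.{v} C] [Abelian C]
variable {D : Type u} [Category.{v} D] [Abelian D]
variable {Y : Set C} {π : C ⥤ D} {ω : D ⥤ C} (adj : π ⊣ ω)

include adj

lemma homOrth_section (hker : ∀ M : C, M ∈ Y ↔ IsZero (π.obj M)) (L : D)
    {T : C} (hT : T ∈ Y) (f : T ⟶ ω.obj L) : f = 0 := by
  haveI : ω.IsRightAdjoint := adj.isRightAdjoint
  have hz : IsZero (π.obj T) := (hker T).1 hT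
  have h0 : (adj.homEquiv T L).symm f = 0 := hz.eq_zero_of_src _
  have h1 := congrArg (adj.homEquiv T L) h0
  rw [Equiv.apply_symm_apply] at h1
  rw [h1, Adjunction.homEquiv_unit, Functor.map_zero, comp_zero]

lemma mono_unit_of_torsionFree [ω.Full] [ω.Faithful] [PreservesFiniteLimits π]
    (hker : ∀ M : C, M ∈ Y ↔ IsZero (π.obj M)) {M : C} (hM : IsTorsionFree Y M) :
    Mono (adj.unit.app M) := by
  haveI : π.IsLeftAdjoint := adj.isLeftAdjoint
  haveI : π.PreservesMonomorphisms := preservesMonomorphisms_of_preservesLimitsOfShape π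
  have h3 : adj.counit.app (π.obj M) ≫ π.map (adj.unit.app M) = 𝟙 _ := by
    rw [← cancel_mono (adj.counit.app (π.obj M)), Category.assoc,
      adj.left_triangle_components M]
    simp
  haveI hiso : IsIso (π.map (adj.unit.app M)) :=
    ⟨⟨adj.counit.app (π.obj M), adj.left_triangle_components M, h3⟩⟩
  have h2 : π.map (kernel.ι (adj.unit.app M)) ≫ π.map (adj.unit.app M) = 0 := by
    rw [← π.map_comp, kernel.condition, Functor.map_zero]
  have h1 : π.map (kernel.ι (adj.unit.app M)) = 0 := by
    rw [← cancel_mono (π.map (adj.unit.app M)), zero_comp]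
    exact h2
  haveI : Mono (π.map (kernel.ι (adj.unit.app M))) := π.map_mono _
  have hzk : IsZero (π.obj (kernel (adj.unit.app M))) :=
    IsZero.of_mono_eq_zero _ h1
  have hzero : IsZero (kernel (adj.unit.app M)) :=
    hM _ (kernel.ι _) inferInstance ((hker _).2 hzk)
  exact Abelian.mono_of_kernel_ι_eq_zero _ (hzero.eq_zero_of_src _)

lemma homOrth_of_torsionFree [ω.Full] [ω.Faithful] [PreservesFiniteLimits π]
    (hker : ∀ M : C, M ∈ Y ↔ IsZero (π.obj M)) {M : C} (hM : IsTorsionFree Y M)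
    {T : C} (hT : T ∈ Y) (f : T ⟶ M) : f = 0 := by
  haveI := mono_unit_of_torsionFree adj hker hM
  have h0 : f ≫ adj.unit.app M = 0 := homOrth_section adj hker (π.obj M) hT _
  rw [← cancel_mono (adj.unit.app M), zero_comp]
  exact h0

end AdjAux

end Statement8Aux


/-- The assignments `Z ↦ π(Z)` and `𝒵 ↦ (π⁻¹(𝒵))'` are mutually inverse
bijections between `Y`-weakly closed subcategories of `X` and weakly closed
subcategories of `X/Y`. -/
theorem statement_8 {X : Type u} [Category.{v} X] [Abelian X]
    [HasColimits X] [HasFilteredColimits X] [AB5 X]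
    (hgen : ∃ G : X, IsSeparator G)
    {D : Type u} [Category.{v} D] [Abelian D] [HasColimits D]
    (Y : Set X) (hYloc : IsLocalizing Y)
    (π : X ⥤ D) (ω : D ⥤ X) (adj : π ⊣ ω) [PreservesFiniteLimits π]
    [ω.Full] [ω.Faithful]
    (hker : ∀ M : X, M ∈ Y ↔ IsZero (π.obj M)) :
    (∀ Z : Set X, IsYWeaklyClosed π ω Y Z →
      IsWeaklyClosed (imageSub π Z) ∧ torsPart Y (preimageSub π (imageSub π Z)) = Z) ∧
    (∀ 𝒵 : Set D, IsWeaklyClosed 𝒵 →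
      IsYWeaklyClosed π ω Y (torsPart Y (preimageSub π 𝒵)) ∧
        imageSub π (torsPart Y (preimageSub π 𝒵)) = 𝒵) := by
  classical
  obtain ⟨Gs, hGs⟩ := hgen
  haveI : Balanced X := inferInstance
  haveI : WellPowered.{v} X := wellPowered_of_isSeparator Gs hGs
  haveI : HasLimits X := by
    haveI := small_subsingleton ({Gs} : Set X)
    exact hasLimits_of_hasColimits_of_isSeparating hGs
  haveI : HasCoproducts.{v} X := fun α => inferInstance
  haveI : HasFiniteBiproducts X := Limits.HasFiniteBiproducts.of_hasFiniteProducts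
  haveI : AB4 X := AB4.of_AB5 X
  haveI : π.IsLeftAdjoint := adj.isLeftAdjoint
  haveI : ω.IsRightAdjoint := adj.isRightAdjoint
  haveI : PreservesColimitsOfSize.{v, v} π := adj.leftAdjoint_preservesColimits
  haveI : π.PreservesMonomorphisms := preservesMonomorphisms_of_preservesLimitsOfShape π
  -- basic orthogonality facts
  have hOrthSec : ∀ (L : D) (T : X), T ∈ Y → ∀ f : T ⟶ ω.obj L, f = 0 :=
    fun L T hT f => homOrth_section adj hker L hT f
  have hMonoUnit : ∀ {M : X}, IsTorsionFree Y M → Mono (adj.unit.app M) :=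
    fun hM => mono_unit_of_torsionFree adj hker hM
  have hTFofHO : ∀ {M : X}, (∀ T : X, T ∈ Y → ∀ f : T ⟶ M, f = 0) → IsTorsionFree Y M := by
    intro M h N f hf hN
    haveI := hf
    exact IsZero.of_mono_eq_zero f (h N hN f)
  have hHOsub : ∀ {A M : X} (f : A ⟶ M), Mono f →
      (∀ T : X, T ∈ Y → ∀ g : T ⟶ M, g = 0) → (∀ T : X, T ∈ Y → ∀ g : T ⟶ A, g = 0) := by
    intro A M f hf hM T hT g
    haveI := hf
    rw [← cancel_mono f, zero_comp]
    exact hM T hT (g ≫ f)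
  have hHOsigma : ∀ {κ : Type v} (g : κ → X),
      (∀ k (T : X), T ∈ Y → ∀ f : T ⟶ g k, f = 0) →
      (∀ T : X, T ∈ Y → ∀ f : T ⟶ ∐ g, f = 0) := by
    intro κ g hg T hT f
    obtain ⟨m, hm⟩ := exists_mono_sigma_to_pi g
    haveI := hm
    rw [← cancel_mono m, zero_comp]
    apply limit.hom_ext
    rintro ⟨i⟩
    simp only [zero_comp, Category.assoc]
    exact hg i T hT _
  have hTFSigmaHO : ∀ {κ : Type v} (g : κ → X), (∀ k, IsTorsionFree Y (g k)) →
      (∀ T : X, T ∈ Y → ∀ f : T ⟶ ∐ g, f = 0) := by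
    intro κ g hg T hT f
    let φ : Discrete.functor g ⟶ Discrete.functor (fun k => ω.obj (π.obj (g k))) :=
      Discrete.natTrans (fun j => adj.unit.app (g j.as))
    haveI : ∀ j, Mono (φ.app j) := fun j => hMonoUnit (hg j.as)
    haveI : Mono φ := NatTrans.mono_of_mono_app φ
    haveI : PreservesFiniteLimits (colim (J := Discrete κ) (C := X)) :=
      inferInstance
    haveI : (colim (J := Discrete κ) (C := X)).PreservesMonomorphisms :=
      preservesMonomorphisms_of_preservesLimitsOfShape _
    haveI : Mono (colim.map φ) := colim.map_mono φ
    have h0 : f ≫ colim.map φ = 0 :=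
      hHOsigma (fun k => ω.obj (π.obj (g k))) (fun k T hT q => hOrthSec _ T hT q) T hT _
    rw [← cancel_mono (colim.map φ), zero_comp]
    exact h0
  have hisoD : ∀ {Z : Set D}, IsWeaklyClosed Z → ∀ {A B : D}, (A ≅ B) → A ∈ Z → B ∈ Z := by
    intro Z hZ A B e hA
    exact hZ.mem_of_mono e.inv inferInstance hA
  have hπSigma : ∀ {κ : Type v} (g : κ → X),
      Nonempty (π.obj (∐ g) ≅ ∐ (fun k => π.obj (g k))) := by
    intro κ g
    exact ⟨preservesColimitIso π (Discrete.functor g) ≪≫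
      HasColimit.isoOfNatIso (Discrete.natIso (fun j => Iso.refl _))⟩
  constructor
  · -- first half
    intro Z hZ
    obtain ⟨hZwc, hZes, hZtf⟩ := hZ
    have himg : IsWeaklyClosed (imageSub π Z) := by
      constructor
      · rintro A N f hf ⟨M, hM, ⟨e⟩⟩
        refine ⟨ω.obj A, ?_, ⟨asIso (adj.counit.app A)⟩⟩
        haveI := hf
        haveI : Mono (f ≫ e.inv) := mono_comp _ _
        exact hZwc.mem_of_mono (ω.map (f ≫ e.inv)) (ω.map_mono _) (hZes M hM)
      · rintro N B f hf ⟨M, hM, ⟨e⟩⟩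
        haveI := hf
        haveI : Epi (e.hom ≫ f) := epi_comp _ _
        set g : M ⟶ ω.obj B := adj.homEquiv M B (e.hom ≫ f) with hgdef
        have hfac : π.map g ≫ adj.counit.app B = e.hom ≫ f := by
          have h1 : (adj.homEquiv M B).symm g = e.hom ≫ f := by
            rw [hgdef]; exact Equiv.symm_apply_apply _ _
          rwa [Adjunction.homEquiv_counit] at h1
        haveI : Epi (π.map g) := by
          have h2 : π.map g = (e.hom ≫ f) ≫ inv (adj.counit.app B) := by
            rw [← hfac]; simp
          rw [h2]; exact epi_comp _ _
        haveI : Epi (π.map (Abelian.factorThruImage g)) := π.map_epi _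
        haveI : Mono (π.map (Abelian.image.ι g)) := π.map_mono _
        haveI : Epi (π.map (Abelian.factorThruImage g) ≫ π.map (Abelian.image.ι g)) := by
          rw [← π.map_comp, Abelian.image.fac]
          infer_instance
        haveI : Epi (π.map (Abelian.image.ι g)) :=
          epi_of_epi (π.map (Abelian.factorThruImage g)) _
        haveI : IsIso (π.map (Abelian.image.ι g)) := isIso_of_mono_of_epi _
        exact ⟨Abelian.image g,
          hZwc.mem_of_epi (Abelian.factorThruImage g) inferInstance hM,
          ⟨asIso (π.map (Abelian.image.ι g)) ≪≫ asIso (adj.counit.app B)⟩⟩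
      · intro κ g hg
        choose Mk hMk ek using hg
        refine ⟨∐ Mk, hZwc.sigma_mem Mk hMk, ⟨?_⟩⟩
        exact (hπSigma Mk).some ≪≫
          HasColimit.isoOfNatIso (Discrete.natIso (fun j => (ek j.as).some))
    refine ⟨himg, ?_⟩
    apply Set.Subset.antisymm
    · have hsub : {N : X | N ∈ preimageSub π (imageSub π Z) ∧ IsTorsionFree Y N} ⊆ Z := by
        rintro N ⟨hNpre, hNtf⟩
        obtain ⟨M', hM', ⟨e⟩⟩ := hNpre
        haveI := hMonoUnit hNtf
        haveI : Mono (adj.unit.app N ≫ ω.map e.inv) := mono_comp _ _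
        exact hZwc.mem_of_mono (adj.unit.app N ≫ ω.map e.inv) inferInstance (hZes M' hM')
      exact generatedBy_subset_of_weaklyClosed hZwc hsub
    · intro M hM
      have hsub2 : {N : X | N ∈ Z ∧ IsTorsionFree Y N} ⊆
          {N : X | N ∈ preimageSub π (imageSub π Z) ∧ IsTorsionFree Y N} := by
        rintro N ⟨h1, h2⟩
        exact ⟨⟨N, h1, ⟨Iso.refl _⟩⟩, h2⟩
      exact generatedBy_mono_set hsub2 (hZtf hM)
  · -- second half
    intro Zc hZc
    have hW : IsWeaklyClosed (preimageSub π Zc) := by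
      constructor
      · intro A M f hf hM
        haveI := hf
        exact hZc.mem_of_mono (π.map f) (π.map_mono f) hM
      · intro M B f hf hM
        haveI := hf
        exact hZc.mem_of_epi (π.map f) (π.map_epi f) hM
      · intro κ g hg
        exact hisoD hZc (hπSigma g).some.symm (hZc.sigma_mem _ hg)
    have hZsubW : torsPart Y (preimageSub π Zc) ⊆ preimageSub π Zc :=
      generatedBy_subset_of_weaklyClosed hW (fun N hN => hN.1)
    have hTFW_mem : ∀ N : X, N ∈ preimageSub π Zc → IsTorsionFree Y N →
        N ∈ torsPart Y (preimageSub π Zc) :=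
      fun N h1 h2 => mem_generatedBy_of_mem ⟨h1, h2⟩
    have hωmem : ∀ L : D, L ∈ Zc → ω.obj L ∈ torsPart Y (preimageSub π Zc) := by
      intro L hL
      refine hTFW_mem _ ?_ (hTFofHO (fun T hT f => hOrthSec L T hT f))
      exact hisoD hZc (asIso (adj.counit.app L)).symm hL
    refine ⟨⟨?_, ?_, ?_⟩, ?_⟩
    · constructor
      · intro A M f hf hM
        obtain ⟨κ, g, hg, p, hp⟩ := hM
        haveI := hf
        haveI := hp
        have hHOsum : ∀ T : X, T ∈ Y → ∀ q : T ⟶ ∐ g, q = 0 :=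
          fun T hT q => hTFSigmaHO g (fun k => (hg k).2) T hT q
        haveI : Mono (pullback.fst p f) := inferInstance
        haveI : Epi (pullback.snd p f) := inferInstance
        have hBW : pullback p f ∈ preimageSub π Zc :=
          hW.mem_of_mono (pullback.fst p f) inferInstance
            (hW.sigma_mem g (fun k => (hg k).1))
        have hBTF : IsTorsionFree Y (pullback p f) :=
          hTFofHO (hHOsub (pullback.fst p f) inferInstance hHOsum)
        exact epi_mem_generatedBy (pullback.snd p f) inferInstance (hTFW_mem _ hBW hBTF)
      · intro M B f hf hM
        exact epi_mem_generatedBy f hf hM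
      · intro κ g hg
        exact sigma_mem_generatedBy g hg
    · intro M hM
      exact hωmem _ (hZsubW hM)
    · rintro M ⟨κ, g, hg, p, hp⟩
      exact ⟨κ, g, fun k => ⟨hTFW_mem _ (hg k).1 (hg k).2, (hg k).2⟩, p, hp⟩
    · apply Set.Subset.antisymm
      · rintro N ⟨M, hM, ⟨e⟩⟩
        exact hisoD hZc e (hZsubW hM)
      · intro L hL
        exact ⟨ω.obj L, hωmem L hL, ⟨asIso (adj.counit.app L)⟩⟩


end Paper
end

section
/- Let X be a Grothendieck category with a localizing subcategory Y and quotient functor π : X → X/Y. Let Z be a weakly closed subcategory of X, let Z' be the full subcategory generated by the Y-torsionfree objects in Z, and let Ẑ = (π^{-1}(π(Z)))'. Then Ẑ = (Y * Z)', where Y * Z is the Gabriel product; that is, Ẑ equals the full subcategory generated by the Y-torsionfree objects of the Gabriel product Y * Z. -/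
/-! Both sides are generated by the same `Y`-torsionfree objects. If `π M ≅ π N` with `N ∈ Z`
and `M` torsionfree, the unit embeds `M` into `ωπN` (its kernel is killed by `π`, hence lies
in `Y`). The image of `N ⟶ ωπN` has cokernel in `Y`, so its preimage in `M` is an object of `Z`
with quotient in `Y`. Conversely, the exact functor `π` turns an extension of an object of `Y`
by `M'` into an isomorphism `π M' ≅ π P`. -/

open CategoryTheory CategoryTheory.Limits Opposite

universe v u

namespace Paper

variable {C : Type u} [Category.{v} C]

variable [Abelian C]

variable {A : Type v}

section ExactFunctor

variable {C : Type u} [Category.{v} C] [Abelian C]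

lemma mem_gabrielProd_of_mono {Z W : Set C} {K M : C} (f : K ⟶ M) [Mono f]
    (hK : K ∈ W) (hQ : cokernel f ∈ Z) : M ∈ gabrielProd Z W :=
  ⟨ShortComplex.mk f (cokernel.π f) (cokernel.condition f),
    { exact := ShortComplex.exact_of_g_is_cokernel _ (cokernelIsCokernel f) }, hK, hQ,
    ⟨Iso.refl M⟩⟩

variable {D : Type u} [Category.{v} D] [Abelian D] (π : C ⥤ D)

lemma isZero_map_kernel_of_mono_map [PreservesFiniteLimits π] {A B : C} (f : A ⟶ B)
    [Mono (π.map f)] : IsZero (π.obj (kernel f)) :=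
  (isZero_kernel_of_mono (π.map f)).of_iso (PreservesKernel.iso π f)

lemma isZero_map_cokernel_of_epi_map [PreservesFiniteColimits π] {A B : C} (f : A ⟶ B)
    [Epi (π.map f)] : IsZero (π.obj (cokernel f)) :=
  (isZero_cokernel_of_epi (π.map f)).of_iso (PreservesCokernel.iso π f)

variable {Y : Set C} (hker : ∀ M : C, M ∈ Y ↔ IsZero (π.obj M))
include hker

lemma mono_of_mono_map_of_isTorsionFree [PreservesFiniteLimits π] {M B : C}
    (hM : IsTorsionFree Y M) (f : M ⟶ B) [Mono (π.map f)] : Mono f :=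
  Preadditive.mono_of_kernel_iso_zero
    (hM _ (kernel.ι f) inferInstance ((hker _).2 (isZero_map_kernel_of_mono_map π f))).isoZero

lemma mem_imageSub_of_mem_gabrielProd [PreservesFiniteLimits π] [PreservesFiniteColimits π]
    {Z : Set C} {M : C} (hM : M ∈ gabrielProd Y Z) : π.obj M ∈ imageSub π Z := by
  obtain ⟨S, hS, hX₁, hX₃, ⟨e⟩⟩ := hM
  have hπS : (S.map π).ShortExact := hS.map_of_exact π
  have : Epi (π.map S.f) := hπS.exact.epi_f (((hker _).1 hX₃).eq_of_tgt _ _)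
  have : Mono (π.map S.f) := hπS.mono_f
  have : IsIso (π.map S.f) := isIso_of_mono_of_epi _
  exact ⟨S.X₁, hX₁, ⟨asIso (π.map S.f) ≪≫ π.mapIso e⟩⟩

lemma mem_gabrielProd_of_iso_map [HasColimits C] [PreservesFiniteLimits π] {Z : Set C}
    (hZ : IsWeaklyClosed Z) {ω : D ⥤ C} (adj : π ⊣ ω) [ω.Full] [ω.Faithful]
    {M N : C} (hN : N ∈ Z) (hM : IsTorsionFree Y M) (e : π.obj N ≅ π.obj M) :
    M ∈ gabrielProd Y Z := by
  have : π.IsLeftAdjoint := adj.isLeftAdjoint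
  let u := adj.unit.app N
  let m := adj.unit.app M ≫ ω.map e.inv
  have : Mono m := by
    have : IsIso (π.map m) := by simp only [m, Functor.map_comp]; infer_instance
    exact mono_of_mono_map_of_isTorsionFree π hker hM m
  -- `kernel q` is the preimage in `M` of the image of `N` in `ωπN`.
  let q := m ≫ cokernel.π u
  have hq : (kernel.ι q ≫ m) ≫ cokernel.π u = 0 := by
    rw [Category.assoc]; exact kernel.condition q
  refine mem_gabrielProd_of_mono (kernel.ι q) ?_ ((hker _).2 ?_)
  · exact hZ.mem_of_mono (kernel.lift (cokernel.π u) _ hq) inferInstance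
      (hZ.mem_of_epi (Abelian.factorThruImage u) inferInstance hN)
  · exact (isZero_map_cokernel_of_epi_map π u).of_mono (π.map (Abelian.factorThruCoimage q))

end ExactFunctor

theorem statement_12_general {X : Type u} [Category.{v} X] [Abelian X]
    [HasColimits X]
    {D : Type u} [Category.{v} D] [Abelian D]
    (Y : Set X)
    (π : X ⥤ D) (ω : D ⥤ X) (adj : π ⊣ ω) [PreservesFiniteLimits π]
    [ω.Full] [ω.Faithful]
    (hker : ∀ M : X, M ∈ Y ↔ IsZero (π.obj M))
    (Z : Set X) (hZ : IsWeaklyClosed Z) :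
    torsPart Y (preimageSub π (imageSub π Z)) = torsPart Y (gabrielProd Y Z) := by
  have : π.IsLeftAdjoint := adj.isLeftAdjoint
  refine congrArg generatedBy (Set.ext fun M => and_congr_left fun hM => ⟨?_, ?_⟩)
  · rintro ⟨N, hN, ⟨e⟩⟩
    exact mem_gabrielProd_of_iso_map π hker hZ adj hN hM e
  · exact mem_imageSub_of_mem_gabrielProd π hker

/-- For a weakly closed `Z`, the subcategory `Ẑ = (π⁻¹(π(Z)))'` equals
`(Y * Z)'`, the subcategory generated by the `Y`-torsionfree objects of the Gabriel
product `Y * Z`. -/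
theorem statement_12 {X : Type u} [Category.{v} X] [Abelian X]
    [HasColimits X] [HasFilteredColimits X] [AB5 X]
    (hgen : ∃ G : X, IsSeparator G)
    {D : Type u} [Category.{v} D] [Abelian D] [HasColimits D]
    (Y : Set X) (hYloc : IsLocalizing Y)
    (π : X ⥤ D) (ω : D ⥤ X) (adj : π ⊣ ω) [PreservesFiniteLimits π]
    [ω.Full] [ω.Faithful]
    (hker : ∀ M : X, M ∈ Y ↔ IsZero (π.obj M))
    (Z : Set X) (hZ : IsWeaklyClosed Z) :
    torsPart Y (preimageSub π (imageSub π Z)) = torsPart Y (gabrielProd Y Z) :=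
  statement_12_general Y π ω adj hker Z hZ

end Paper
end

section
/- Let X be a Grothendieck category with a localizing subcategory Y, quotient functor π : X → X/Y and section functor ω : X/Y → X. Let Z be a weakly closed subcategory of X, let Z' be the full subcategory generated by the Y-torsionfree objects in Z, and let Ẑ = (π^{-1}(π(Z)))'. Then the following are equivalent: (i) Z is Y-essentially stable; (ii) Z' = Ẑ; (iii) Y * Z ⊆ Z * Y, where * denotes the Gabriel product. -/
open CategoryTheory CategoryTheory.Limits Opposite

universe v u

namespace Paper

variable {C : Type u} [Category.{v} C]

variable [Abelian C]

variable {A : Type v}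

section AuxStatement13

variable {C' : Type u} [Category.{v} C'] [Abelian C'] [HasColimits C']

lemma mem_generatedBy_aux {G : Set C'} {M : C'} (hM : M ∈ G) : M ∈ generatedBy G := by
  refine ⟨PUnit, fun _ => M, fun _ => hM, Sigma.desc (fun _ => 𝟙 M), ?_⟩
  haveI : IsSplitEpi (Sigma.desc (fun _ : PUnit.{v+1} => 𝟙 M)) :=
    IsSplitEpi.mk' ⟨Sigma.ι (fun _ : PUnit.{v+1} => M) PUnit.unit, by simp⟩
  infer_instance

lemma generatedBy_mono_aux {G G' : Set C'} (h : G ⊆ G') : generatedBy G ⊆ generatedBy G' :=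
  fun _ ⟨ι, f, hf, p, hp⟩ => ⟨ι, f, fun i => h (hf i), p, hp⟩

end AuxStatement13

/-- For a weakly closed `Z`, the following are equivalent:
(i) `Z` is `Y`-essentially stable; (ii) `Z' = Ẑ`; (iii) `Y * Z ⊆ Z * Y`. -/
theorem statement_13 {X : Type u} [Category.{v} X] [Abelian X]
    [HasColimits X] [HasFilteredColimits X] [AB5 X]
    (hgen : ∃ G : X, IsSeparator G)
    {D : Type u} [Category.{v} D] [Abelian D] [HasColimits D]
    (Y : Set X) (hYloc : IsLocalizing Y)
    (π : X ⥤ D) (ω : D ⥤ X) (adj : π ⊣ ω) [PreservesFiniteLimits π]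
    [ω.Full] [ω.Faithful]
    (hker : ∀ M : X, M ∈ Y ↔ IsZero (π.obj M))
    (Z : Set X) (hZ : IsWeaklyClosed Z) :
    (EssStable π ω Z ↔ torsPart Y Z = torsPart Y (preimageSub π (imageSub π Z))) ∧
    (EssStable π ω Z ↔ gabrielProd Y Z ⊆ gabrielProd Z Y) := by
  haveI : π.IsLeftAdjoint := adj.isLeftAdjoint
  haveI : ω.IsRightAdjoint := adj.isRightAdjoint
  haveI : PreservesColimits π := adj.leftAdjoint_preservesColimits
  -- `π` applied to any unit map is an isomorphism.
  have hπη : ∀ M : X, IsIso (π.map (adj.unit.app M)) := by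
    intro M
    haveI : IsIso (π.map (adj.unit.app M) ≫ adj.counit.app (π.obj M)) := by
      rw [adj.left_triangle_components M]; exact IsIso.id _
    exact IsIso.of_isIso_comp_right _ (adj.counit.app (π.obj M))
  -- objects in the image of `ω` are `Y`-torsionfree
  have hωTF : ∀ N : D, IsTorsionFree Y (ω.obj N) := by
    intro N S f hf hS
    haveI := hf
    have hz : IsZero (π.obj S) := (hker S).1 hS
    have h1 : f = adj.unit.app S ≫ ω.map ((adj.homEquiv S N).symm f) := by
      conv_lhs => rw [← (adj.homEquiv S N).apply_symm_apply f]
      rw [Adjunction.homEquiv_unit]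
    have h2 : ((adj.homEquiv S N).symm f) = (0 : π.obj S ⟶ N) := hz.eq_of_src _ _
    rw [h2, Functor.map_zero, comp_zero] at h1
    exact IsZero.of_mono_eq_zero f h1
  -- the kernel of any unit map lies in `Y`
  have hkerη : ∀ M : X, kernel (adj.unit.app M) ∈ Y := by
    intro M
    haveI := hπη M
    have hc : π.map (kernel.ι (adj.unit.app M)) ≫ π.map (adj.unit.app M) = 0 := by
      rw [← π.map_comp, kernel.condition, Functor.map_zero]
    have h0 : π.map (kernel.ι (adj.unit.app M)) = 0 := zero_of_comp_mono _ hc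
    exact (hker _).2 (IsZero.of_mono_eq_zero _ h0)
  -- the cokernel of any unit map lies in `Y`
  have hcokerη : ∀ M : X, cokernel (adj.unit.app M) ∈ Y := by
    intro M
    haveI := hπη M
    have hc : π.map (adj.unit.app M) ≫ π.map (cokernel.π (adj.unit.app M)) = 0 := by
      rw [← π.map_comp, cokernel.condition, Functor.map_zero]
    have h0 : π.map (cokernel.π (adj.unit.app M)) = 0 := zero_of_epi_comp _ hc
    exact (hker _).2 (IsZero.of_epi_eq_zero _ h0)
  -- (i) → (iii)
  have key1 : EssStable π ω Z → gabrielProd Y Z ⊆ gabrielProd Z Y := by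
    intro hess P hP
    obtain ⟨S, hS, hX1, hX3, ⟨e⟩⟩ := hP
    haveI := hS.mono_f
    haveI := hS.epi_g
    have hSm := hS.map_of_exact π
    have h3 : IsZero ((S.map π).X₃) := (hker _).1 hX3
    have hg0 : (S.map π).g = 0 := h3.eq_of_tgt _ _
    haveI : Epi (S.map π).f := hSm.exact.epi_f hg0
    haveI : Mono (S.map π).f := hSm.mono_f
    haveI : IsIso (π.map S.f) := isIso_of_mono_of_epi (S.map π).f
    set u := adj.unit.app S.X₂ with hu
    have hωZ : ω.obj (π.obj S.X₂) ∈ Z :=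
      hZ.mem_of_mono (inv (ω.map (π.map S.f))) inferInstance (hess _ hX1)
    have hcoim : cokernel (kernel.ι u) ∈ Z := by
      have hm : Mono ((Abelian.coimageIsoImage u).hom ≫ Abelian.image.ι u) := mono_comp _ _
      exact hZ.mem_of_mono _ hm hωZ
    refine ⟨ShortComplex.mk (kernel.ι u) (cokernel.π (kernel.ι u)) (cokernel.condition _),
      ⟨?_⟩, hkerη _, hcoim, ⟨e⟩⟩
    exact ShortComplex.exact_of_g_is_cokernel _ (cokernelIsCokernel _)
  -- (iii) → (i)
  have key2 : gabrielProd Y Z ⊆ gabrielProd Z Y → EssStable π ω Z := by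
    intro hsub M hM
    set u := adj.unit.app M with hu
    have hmem : ω.obj (π.obj M) ∈ gabrielProd Y Z := by
      refine ⟨ShortComplex.mk (kernel.ι (cokernel.π u)) (cokernel.π u) (kernel.condition _),
        ⟨?_⟩, ?_, hcokerη M, ⟨Iso.refl _⟩⟩
      · exact ShortComplex.exact_of_f_is_kernel _ (kernelIsKernel _)
      · exact hZ.mem_of_epi (Abelian.factorThruImage u) inferInstance hM
    obtain ⟨S', hS', h1, h3, ⟨e⟩⟩ := hsub hmem
    haveI := hS'.mono_f
    haveI := hS'.epi_g
    have hz1 : IsZero S'.X₁ := hωTF _ S'.X₁ (S'.f ≫ e.hom) (mono_comp _ _) h1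
    have hf0 : S'.f = 0 := hz1.eq_of_src _ _
    haveI : Mono S'.g := hS'.exact.mono_g hf0
    haveI : IsIso S'.g := isIso_of_mono_of_epi S'.g
    exact hZ.mem_of_mono (e.inv ≫ S'.g) (mono_comp _ _) h3
  -- (i) → (ii)
  have key3 : EssStable π ω Z →
      torsPart Y Z = torsPart Y (preimageSub π (imageSub π Z)) := by
    intro hess
    apply Set.Subset.antisymm
    · exact generatedBy_mono_aux (fun N hN => ⟨⟨N, hN.1, ⟨Iso.refl _⟩⟩, hN.2⟩)
    · apply generatedBy_mono_aux
      rintro N ⟨hNmem, hNtf⟩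
      obtain ⟨M₀, hM₀, ⟨e⟩⟩ := hNmem
      refine ⟨?_, hNtf⟩
      have hz : IsZero (kernel (adj.unit.app N)) :=
        hNtf _ (kernel.ι _) inferInstance (hkerη N)
      haveI : Mono (adj.unit.app N) := Preadditive.mono_of_kernel_zero (hz.eq_of_src _ _)
      exact hZ.mem_of_mono (adj.unit.app N ≫ ω.map e.inv) (mono_comp _ _) (hess _ hM₀)
  -- (ii) → (i)
  have key4 : torsPart Y Z = torsPart Y (preimageSub π (imageSub π Z)) →
      EssStable π ω Z := by
    intro heq M hM
    have h1 : ω.obj (π.obj M) ∈ torsPart Y (preimageSub π (imageSub π Z)) := by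
      apply mem_generatedBy_aux
      haveI := hπη M
      exact ⟨⟨M, hM, ⟨asIso (π.map (adj.unit.app M))⟩⟩, hωTF _⟩
    rw [← heq] at h1
    obtain ⟨ι, f, hf, p, hp⟩ := h1
    exact hZ.mem_of_epi p hp (hZ.sigma_mem f fun i => (hf i).1)
  exact ⟨⟨key3, key4⟩, ⟨key1, key2⟩⟩

end Paper
end

section
/- Let X be a Grothendieck category with localizing subcategories Y₁ ⊆ Y₂. Let π₁ : X → X/Y₁ be the quotient functor, let 𝒴 = π₁(Y₂), which is a localizing subcategory of X/Y₁, and identify (X/Y₁)/𝒴 with X/Y₂ so that the quotient functor π₂ : X → X/Y₂ factors as π₂ = π̃ ∘ π₁ with π̃ : X/Y₁ → (X/Y₁)/𝒴, and the section functors satisfy ω₂ = ω₁ ∘ ω̃. Let Z be a weakly closed subcategory of X. Then: (1) if M ∈ X is Y₂-torsionfree, then π₁(M) is 𝒴-torsionfree in X/Y₁; (2) if Z is Y₂-torsionfree generated in X, then π₁(Z) is 𝒴-torsionfree generated in X/Y₁; (3) if Z is Y₂-essentially stable in X, then π₁(Z) is 𝒴-essentially stable in X/Y₁. -/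
open CategoryTheory CategoryTheory.Limits Opposite

universe v u

namespace Paper

variable {C : Type u} [Category.{v} C]

variable [Abelian C]

variable {A : Type v}

/-- For localizing subcategories `Y₁ ⊆ Y₂` of `X`, with `𝒴 = π₁(Y₂)`
localizing in `X/Y₁` and `(X/Y₁)/𝒴` identified with `X/Y₂` (so `π₂ = π̃ ∘ π₁` and
`ω₂ = ω₁ ∘ ω̃`): (1) if `M` is `Y₂`-torsionfree then `π₁(M)` is `𝒴`-torsionfree;
(2) if `Z` is `Y₂`-torsionfree generated then `π₁(Z)` is `𝒴`-torsionfree generated;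
(3) if `Z` is `Y₂`-essentially stable then `π₁(Z)` is `𝒴`-essentially stable. -/
theorem statement_16 {X : Type u} [Category.{v} X] [Abelian X]
    [HasColimits X] [HasFilteredColimits X] [AB5 X]
    (hgen : ∃ G : X, IsSeparator G)
    {D₁ : Type u} [Category.{v} D₁] [Abelian D₁] [HasColimits D₁]
    {D₂ : Type u} [Category.{v} D₂] [Abelian D₂] [HasColimits D₂]
    (Y₁ Y₂ : Set X) (hY₁ : IsLocalizing Y₁) (hY₂ : IsLocalizing Y₂) (hY₁₂ : Y₁ ⊆ Y₂)
    (π₁ : X ⥤ D₁) (ω₁ : D₁ ⥤ X) (adj₁ : π₁ ⊣ ω₁) [PreservesFiniteLimits π₁]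
    [ω₁.Full] [ω₁.Faithful]
    (hker₁ : ∀ M : X, M ∈ Y₁ ↔ IsZero (π₁.obj M))
    (πt : D₁ ⥤ D₂) (ωt : D₂ ⥤ D₁) (adjt : πt ⊣ ωt) [PreservesFiniteLimits πt]
    [ωt.Full] [ωt.Faithful]
    (hkert : ∀ N : D₁, N ∈ imageSub π₁ Y₂ ↔ IsZero (πt.obj N))
    (hker₂ : ∀ M : X, M ∈ Y₂ ↔ IsZero (πt.obj (π₁.obj M)))
    (Z : Set X) (hZ : IsWeaklyClosed Z) :
    IsLocalizing (imageSub π₁ Y₂) ∧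
    (∀ M : X, IsTorsionFree Y₂ M → IsTorsionFree (imageSub π₁ Y₂) (π₁.obj M)) ∧
    (TorsionfreeGenerated Y₂ Z → TorsionfreeGenerated (imageSub π₁ Y₂) (imageSub π₁ Z)) ∧
    (EssStable (π₁ ⋙ πt) (ωt ⋙ ω₁) Z → EssStable πt ωt (imageSub π₁ Z)) := by
  -- preservation instances
  haveI : PreservesColimitsOfSize.{v, v} π₁ := adj₁.leftAdjoint_preservesColimits
  haveI : PreservesColimitsOfSize.{0, 0} π₁ := adj₁.leftAdjoint_preservesColimits
  haveI : PreservesColimitsOfSize.{v, v} πt := adjt.leftAdjoint_preservesColimits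
  haveI : PreservesColimitsOfSize.{0, 0} πt := adjt.leftAdjoint_preservesColimits
  haveI : PreservesLimitsOfSize.{0, 0} ω₁ := adj₁.rightAdjoint_preservesLimits
  haveI : PreservesFiniteColimits πt := ⟨fun _ _ _ => inferInstance⟩
  haveI := adj₁.isLeftAdjoint
  haveI := adjt.isLeftAdjoint
  haveI : IsIso adjt.counit := adjt.counit_isIso_of_R_fully_faithful
  haveI : IsIso adj₁.counit := adj₁.counit_isIso_of_R_fully_faithful
  -- Part (1)
  have part1 : ∀ M : X, IsTorsionFree Y₂ M → IsTorsionFree (imageSub π₁ Y₂) (π₁.obj M) := by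
    intro M hM N f hf hN
    rw [hkert] at hN
    haveI := hf
    set η : M ⟶ ω₁.obj (π₁.obj M) := adj₁.unit.app M with hηdef
    haveI : Mono (ω₁.map f) := preserves_mono_of_preservesLimit ω₁ f
    haveI : IsIso (π₁.map η ≫ adj₁.counit.app (π₁.obj M)) := by
      rw [hηdef, adj₁.left_triangle_components M]
      infer_instance
    haveI : IsIso (π₁.map η) := IsIso.of_isIso_comp_right (π₁.map η) (adj₁.counit.app (π₁.obj M))
    have e : π₁.obj (pullback (ω₁.map f) η) ≅ N :=
      PreservesPullback.iso π₁ (ω₁.map f) η ≪≫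
        asIso (pullback.fst (π₁.map (ω₁.map f)) (π₁.map η)) ≪≫ asIso (adj₁.counit.app N)
    have hP : pullback (ω₁.map f) η ∈ Y₂ := by
      rw [hker₂]
      exact hN.of_iso (πt.mapIso e)
    have hPzero : IsZero (pullback (ω₁.map f) η) :=
      hM _ (pullback.snd (ω₁.map f) η) inferInstance hP
    exact (π₁.map_isZero hPzero).of_iso e.symm
  refine ⟨⟨⟨?_, ?_, ?_⟩, ?_⟩, part1, ?_, ?_⟩
  · -- closed under subobjects
    intro A M f hmono hM
    rw [hkert] at hM ⊢
    haveI := hmono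
    haveI : Mono (πt.map f) := preserves_mono_of_preservesLimit πt f
    rw [IsZero.iff_id_eq_zero]
    exact (cancel_mono (πt.map f)).1 (hM.eq_of_tgt _ _)
  · -- closed under quotients
    intro M B f hepi hM
    rw [hkert] at hM ⊢
    haveI := hepi
    haveI : Epi (πt.map f) := preserves_epi_of_preservesColimit πt f
    rw [IsZero.iff_id_eq_zero]
    exact (cancel_epi (πt.map f)).1 (hM.eq_of_src _ _)
  · -- closed under direct sums
    intro ι f hf
    simp_rw [hkert] at hf ⊢
    refine IsZero.of_iso ?_ (asIso (sigmaComparison πt f)).symm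
    rw [IsZero.iff_id_eq_zero]
    apply Sigma.hom_ext
    intro i
    exact (hf i).eq_of_src _ _
  · -- closed under extensions
    intro S hS h1 h3
    rw [hkert] at h1 h3 ⊢
    have hS' := hS.map_of_exact πt
    exact hS'.exact.isZero_X₂ (h1.eq_of_src _ _) (h3.eq_of_tgt _ _)
  · -- Part (2)
    intro hTF N hN
    obtain ⟨M, hM, ⟨e⟩⟩ := hN
    obtain ⟨ι, g, hg, p, hp⟩ := hTF hM
    refine ⟨ι, fun i => π₁.obj (g i),
      fun i => ⟨⟨g i, (hg i).1, ⟨Iso.refl _⟩⟩, part1 _ (hg i).2⟩, ?_⟩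
    haveI := hp
    haveI : Epi (π₁.map p) := preserves_epi_of_preservesColimit π₁ p
    exact ⟨sigmaComparison π₁ g ≫ π₁.map p ≫ e.hom, inferInstance⟩
  · -- Part (3)
    intro hES N hN
    obtain ⟨M, hM, ⟨e⟩⟩ := hN
    exact ⟨ω₁.obj (ωt.obj (πt.obj (π₁.obj M))), hES M hM,
      ⟨asIso (adj₁.counit.app _) ≪≫ ωt.mapIso (πt.mapIso e)⟩⟩

end Paper
end

section
/- Let X be a Grothendieck category with a localizing subcategory Y and quotient functor π : X → X/Y. Let {Z_β}_{β∈B} be a (small) collection of weakly closed subcategories of X, and set 𝒵_β = π(Z_β). Then: (1) if every Z_β is Y-essentially stable, so is the intersection ∩_β Z_β; (2) π(∩_β Z_β) = ∩_β π(Z_β) provided either every Z_β is Y-essentially stable or the index set B is finite; (3) the Y-weakly closed subcategory of X corresponding to ∩_β 𝒵_β under the bijection between Y-weakly closed subcategories of X and weakly closed subcategories of X/Y is (∩_β Ẑ_β)', where Ẑ_β = (π^{-1}(π(Z_β)))'. -/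
open CategoryTheory CategoryTheory.Limits Opposite

universe v u

namespace Paper

variable {C : Type u} [Category.{v} C]

variable [Abelian C]

variable {A : Type v}

section AuxS17

variable {X : Type u} [Category.{v} X] [Abelian X] [HasColimits X]
  {D : Type u} [Category.{v} D] [Abelian D] [HasColimits D]
  (π : X ⥤ D) (ω : D ⥤ X) (adj : π ⊣ ω) [PreservesFiniteLimits π] [ω.Full] [ω.Faithful]

include adj in
lemma aux_isIso_map_image_ι {S T : X} (g : S ⟶ T) (h : Epi (π.map g)) :
    IsIso (π.map (Limits.image.ι g)) := by
  haveI : π.IsLeftAdjoint := ⟨ω, ⟨adj⟩⟩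
  have hfac : π.map (Limits.factorThruImage g) ≫ π.map (Limits.image.ι g) = π.map g := by
    rw [← π.map_comp, Limits.image.fac]
  haveI : Epi (π.map (Limits.factorThruImage g) ≫ π.map (Limits.image.ι g)) := by
    rw [hfac]; exact h
  haveI : Epi (π.map (Limits.image.ι g)) := epi_of_epi (π.map (Limits.factorThruImage g)) _
  haveI : Mono (π.map (Limits.image.ι g)) := π.map_mono _
  exact isIso_of_mono_of_epi _

include ω adj in
lemma aux_epi_lift {Zs : Set X} (hZ : IsWeaklyClosed Zs) {S : X} (hS : S ∈ Zs)
    {Nd : D} (e : π.obj S ⟶ Nd) (he : Epi e) : Nd ∈ imageSub π Zs := by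
  haveI := he
  haveI : IsIso adj.counit := adj.counit_isIso_of_R_fully_faithful
  haveI : IsIso (adj.counit.app Nd) := inferInstance
  set g : S ⟶ ω.obj Nd := (adj.homEquiv S Nd) e with hgdef
  have hg : π.map g ≫ adj.counit.app Nd = e := by
    have h1 : (adj.homEquiv S Nd).symm g = π.map g ≫ adj.counit.app Nd :=
      adj.homEquiv_counit _ _ _
    rw [hgdef, Equiv.symm_apply_apply] at h1
    exact h1.symm
  haveI : Epi (π.map g) := by
    have h2 : π.map g = e ≫ inv (adj.counit.app Nd) := by
      rw [← hg]; simp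
    rw [h2]; exact epi_comp _ _
  haveI := aux_isIso_map_image_ι π ω adj g ‹Epi (π.map g)›
  exact ⟨Limits.image g, hZ.mem_of_epi (Limits.factorThruImage g) inferInstance hS,
    ⟨asIso (π.map (Limits.image.ι g)) ≪≫ asIso (adj.counit.app Nd)⟩⟩

include adj in
lemma aux_gen_mem {Zs : Set X} (hZ : IsWeaklyClosed Zs) {ι : Type v} (f : ι → X)
    (hf : ∀ i, π.obj (f i) ∈ imageSub π Zs) {M : X} (p : (∐ f) ⟶ M) (hp : Epi p) :
    π.obj M ∈ imageSub π Zs := by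
  haveI : π.IsLeftAdjoint := ⟨ω, ⟨adj⟩⟩
  haveI : PreservesColimitsOfSize.{v, v} π := adj.leftAdjoint_preservesColimits
  haveI := hp
  choose M' hM' e using hf
  have E : ∀ i, π.obj (M' i) ≅ π.obj (f i) := fun i => (e i).some
  haveI : Epi (π.map p) := π.map_epi p
  refine aux_epi_lift π ω adj hZ (hZ.sigma_mem M' hM')
    ((inv (sigmaComparison π M')) ≫ (Limits.Sigma.mapIso E).hom ≫
      sigmaComparison π f ≫ π.map p) inferInstance

lemma aux_mem_torsPart {Ys W : Set X} {M : X} (hM : M ∈ W) (hTF : IsTorsionFree Ys M) :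
    M ∈ torsPart Ys W := by
  refine ⟨PUnit.{v+1}, fun _ => M, fun _ => ⟨hM, hTF⟩,
    Limits.Sigma.desc (fun _ => 𝟙 M), ?_⟩
  have hfac : Limits.Sigma.ι (fun _ : PUnit.{v+1} => M) PUnit.unit ≫
      Limits.Sigma.desc (fun _ => 𝟙 M) = 𝟙 M := Limits.Sigma.ι_desc _ _
  exact epi_of_epi_fac hfac

end AuxS17

/-- For a small family `{Z β}` of weakly closed subcategories of `X`:
(1) if every `Z β` is `Y`-essentially stable, so is `⋂ β, Z β`;
(2) `π(⋂ β, Z β) = ⋂ β, π(Z β)` if every `Z β` is `Y`-essentially stable or the index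
set is finite; (3) the `Y`-weakly closed subcategory corresponding to `⋂ β, π(Z β)`
under the bijection is `(⋂ β, Ẑ β)'`. -/
theorem statement_17 {X : Type u} [Category.{v} X] [Abelian X]
    [HasColimits X] [HasFilteredColimits X] [AB5 X]
    (hgen : ∃ G : X, IsSeparator G)
    {D : Type u} [Category.{v} D] [Abelian D] [HasColimits D]
    (Y : Set X) (hYloc : IsLocalizing Y)
    (π : X ⥤ D) (ω : D ⥤ X) (adj : π ⊣ ω) [PreservesFiniteLimits π]
    [ω.Full] [ω.Faithful]
    (hker : ∀ M : X, M ∈ Y ↔ IsZero (π.obj M))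
    (B : Type v) (Z : B → Set X) (hZ : ∀ β, IsWeaklyClosed (Z β)) :
    ((∀ β, EssStable π ω (Z β)) → EssStable π ω (⋂ β, Z β)) ∧
    (((∀ β, EssStable π ω (Z β)) ∨ Finite B) →
      imageSub π (⋂ β, Z β) = ⋂ β, imageSub π (Z β)) ∧
    (torsPart Y (preimageSub π (⋂ β, imageSub π (Z β))) =
      torsPart Y (⋂ β, torsPart Y (preimageSub π (imageSub π (Z β))))) := by
  haveI : π.IsLeftAdjoint := ⟨ω, ⟨adj⟩⟩
  haveI : IsIso adj.counit := adj.counit_isIso_of_R_fully_faithful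
  refine ⟨?_, ?_, ?_⟩
  · intro hEss M hM
    simp only [Set.mem_iInter] at hM ⊢
    exact fun β => hEss β M (hM β)
  · intro hcase
    apply Set.Subset.antisymm
    · rintro N ⟨M, hM, ⟨i⟩⟩
      simp only [Set.mem_iInter] at hM
      exact Set.mem_iInter.2 fun β => ⟨M, hM β, ⟨i⟩⟩
    · intro N hN
      simp only [Set.mem_iInter] at hN
      rcases hcase with hEss | hFin
      · have hω : ∀ β, ω.obj N ∈ Z β := by
          intro β
          obtain ⟨M, hM, ⟨i⟩⟩ := hN β
          haveI : IsIso (ω.map i.inv) := inferInstance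
          exact (hZ β).mem_of_mono (ω.map i.inv) inferInstance (hEss β M hM)
        exact ⟨ω.obj N, Set.mem_iInter.2 hω, ⟨asIso (adj.counit.app N)⟩⟩
      · classical
        haveI := hFin
        let Q : Set X → Prop := fun Zs => ∃ (I : X) (m : I ⟶ ω.obj N),
          Mono m ∧ I ∈ Zs ∧ IsIso (π.map m)
        have qinter : ∀ Z₁ Z₂ : Set X,
            (∀ {A M : X} (f : A ⟶ M), Mono f → M ∈ Z₁ → A ∈ Z₁) →
            (∀ {A M : X} (f : A ⟶ M), Mono f → M ∈ Z₂ → A ∈ Z₂) →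
            Q Z₁ → Q Z₂ → Q (Z₁ ∩ Z₂) := by
          rintro Z₁ Z₂ h₁ h₂ ⟨I₁, m₁, hm₁, hI₁, hiso₁⟩ ⟨I₂, m₂, hm₂, hI₂, hiso₂⟩
          haveI := hm₁; haveI := hm₂; haveI := hiso₁; haveI := hiso₂
          refine ⟨pullback m₁ m₂, pullback.fst m₁ m₂ ≫ m₁, mono_comp _ _, ?_, ?_⟩
          · exact ⟨h₁ (pullback.fst m₁ m₂) inferInstance hI₁,
              h₂ (pullback.snd m₁ m₂) inferInstance hI₂⟩
          · rw [π.map_comp]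
            haveI : IsIso (π.map (pullback.fst m₁ m₂)) := by
              rw [← PreservesPullback.iso_hom_fst π m₁ m₂]
              infer_instance
            infer_instance
        have qsingle : ∀ β, Q (Z β) := by
          intro β
          obtain ⟨M, hM, ⟨i⟩⟩ := hN β
          set g : M ⟶ ω.obj N := (adj.homEquiv M N) i.hom with hgdef
          have hg : π.map g ≫ adj.counit.app N = i.hom := by
            have h1 : (adj.homEquiv M N).symm g = π.map g ≫ adj.counit.app N :=
              adj.homEquiv_counit _ _ _
            rw [hgdef, Equiv.symm_apply_apply] at h1
            exact h1.symm
          haveI : Epi (π.map g) := by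
            have h2 : π.map g = i.hom ≫ inv (adj.counit.app N) := by
              rw [← hg]; simp
            rw [h2]; exact epi_comp _ _
          haveI := aux_isIso_map_image_ι π ω adj g ‹Epi (π.map g)›
          exact ⟨Limits.image g, Limits.image.ι g, inferInstance,
            (hZ β).mem_of_epi (Limits.factorThruImage g) inferInstance hM, ‹_›⟩
        have key : ∀ s : Set B, s.Finite → Q (⋂ β ∈ s, Z β) := by
          intro s hs
          refine Set.Finite.induction_on (motive := fun s _ => Q (⋂ β ∈ s, Z β)) s hs ?_ ?_
          · rw [Set.biInter_empty]
            exact ⟨ω.obj N, 𝟙 _, inferInstance, Set.mem_univ _,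
              by rw [π.map_id]; infer_instance⟩
          · intro a s _ _ ih
            rw [Set.biInter_insert]
            refine qinter _ _ (fun f hf hM => (hZ a).mem_of_mono f hf hM) ?_ (qsingle a) ih
            intro A M f hf hM
            simp only [Set.mem_iInter] at hM ⊢
            exact fun β hβ => (hZ β).mem_of_mono f hf (hM β hβ)
        have hQ := key Set.univ Set.finite_univ
        rw [Set.biInter_univ] at hQ
        obtain ⟨I, m, hm, hI, hiso⟩ := hQ
        haveI := hiso
        exact ⟨I, hI, ⟨asIso (π.map m) ≪≫ asIso (adj.counit.app N)⟩⟩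
  · have hsub : ∀ β, torsPart Y (preimageSub π (imageSub π (Z β))) ⊆
        preimageSub π (imageSub π (Z β)) := by
      rintro β M ⟨ι, f, hf, p, hp⟩
      exact aux_gen_mem π ω adj (hZ β) f (fun i => (hf i).1) p hp
    have hgen : {M : X | M ∈ preimageSub π (⋂ β, imageSub π (Z β)) ∧ IsTorsionFree Y M} =
        {M : X | M ∈ (⋂ β, torsPart Y (preimageSub π (imageSub π (Z β)))) ∧
          IsTorsionFree Y M} := by
      ext M
      simp only [Set.mem_setOf_eq, Set.mem_iInter]
      constructor
      · rintro ⟨h1, h2⟩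
        have h1' : ∀ β, π.obj M ∈ imageSub π (Z β) := by
          have := h1
          simp only [preimageSub, Set.mem_setOf_eq, Set.mem_iInter] at this
          exact this
        exact ⟨fun β => aux_mem_torsPart (h1' β) h2, h2⟩
      · rintro ⟨h1, h2⟩
        refine ⟨?_, h2⟩
        have : ∀ β, π.obj M ∈ imageSub π (Z β) := fun β => hsub β (h1 β)
        simp only [preimageSub, Set.mem_setOf_eq, Set.mem_iInter]
        exact this
    exact congrArg generatedBy hgen


end Paper
end
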